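/- arXiv:2511.03668 — 4 statements merged into one kernel-verified Lean document; each statement's English description precedes it below -/
import Mathlib

section
/- If S is a two-distance set of n points in R^d, then n ≤ (d+1)(d+2)/2. -/
open Polynomial Matrix

noncomputable section

/-- The Borsuk number of a bounded set `S`: the least `k` such that `S` can be covered
by `k` subsets each of diameter strictly smaller than the diameter of `S`. -/
def borsukNumber {d : ℕ} (S : Set (EuclideanSpace ℝ (Fin d))) : ℕ :=
  sInf {k | ∃ c : Fin k → Set (EuclideanSpace ℝ (Fin d)),
    (∀ i, c i ⊆ S ∧ Metric.diam (c i) < Metric.diam S) ∧ S ⊆ ⋃ i, c i}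

/-- The clique covering number `θ(G)`: the least number of cliques covering all vertices. -/
def cliqueCoverNumber {V : Type*} (G : SimpleGraph V) : ℕ :=
  sInf {k | ∃ c : Fin k → Set V, (∀ i, G.IsClique (c i)) ∧ (⋃ i, c i) = Set.univ}

/-- The bordered matrix `A_G(t)`: first row and column `(0,1,…,1)`, zero diagonal,
entry `1` at edges of `G` and `t` at non-edges. The `none` index is the border. -/
def graphMat {n : ℕ} (G : SimpleGraph (Fin n)) [DecidableRel G.Adj]
    {R : Type*} [CommRing R] (t : R) : Matrix (Option (Fin n)) (Option (Fin n)) R :=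
  fun i j => match i, j with
  | none, none => 0
  | none, some _ => 1
  | some _, none => 1
  | some i, some j => if i = j then 0 else if G.Adj i j then 1 else t

/-- `C_G(t) = det A_G(t)` as a polynomial in `t`. -/
def graphPoly {n : ℕ} (G : SimpleGraph (Fin n)) [DecidableRel G.Adj] : Polynomial ℝ :=
  (graphMat G (Polynomial.X : Polynomial ℝ)).det

/-- `τ₁(G)`: the smallest root `t > 1` of `C_G`. -/
def tau1 {n : ℕ} (G : SimpleGraph (Fin n)) [DecidableRel G.Adj] : ℝ :=
  sInf {t : ℝ | 1 < t ∧ (graphPoly G).IsRoot t}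

open scoped Classical in
/-- `μ(G)`: the multiplicity of the smallest root `t > 1` of `C_G`, or `0` if none exists. -/
def mu {n : ℕ} (G : SimpleGraph (Fin n)) [DecidableRel G.Adj] : ℕ :=
  if (∃ t : ℝ, 1 < t ∧ (graphPoly G).IsRoot t) then
    (graphPoly G).rootMultiplicity (tau1 G) else 0

/-- `f` realizes `G` in Euclidean space as a two-distance set: distance `1` on edges
and distance `b` on non-edges. -/
def IsRealization {n d : ℕ} (G : SimpleGraph (Fin n)) (b : ℝ)
    (f : Fin n → EuclideanSpace ℝ (Fin d)) : Prop :=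
  (∀ i j, G.Adj i j → dist (f i) (f j) = 1) ∧
  (∀ i j, i ≠ j → ¬ G.Adj i j → dist (f i) (f j) = b)

/-- The Cayley–Menger matrix of a tuple of points (the `none` index is the border). -/
def cmMat {n d : ℕ} (p : Fin n → EuclideanSpace ℝ (Fin d)) :
    Matrix (Option (Fin n)) (Option (Fin n)) ℝ :=
  fun i j => match i, j with
  | none, none => 0
  | none, some _ => 1
  | some _, none => 1
  | some i, some j => dist (p i) (p j) ^ 2

/-- `G` is a disjoint union of cliques (adjacency is transitive). -/
def IsUnionOfCliques {V : Type*} (G : SimpleGraph V) : Prop :=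
  ∀ u v w, G.Adj u v → G.Adj v w → u ≠ w → G.Adj u w

/-- `G` is complete multipartite (non-adjacency is transitive). -/
def IsCompleteMultipartite {V : Type*} (G : SimpleGraph V) : Prop :=
  ∀ u v w, ¬ G.Adj u v → ¬ G.Adj v w → ¬ G.Adj u w

/-- The clique number `ω(G)`. -/
def cliqueNumber {V : Type*} (G : SimpleGraph V) : ℕ :=
  sSup {k | ∃ s : Finset V, G.IsNClique k s}

/-!
Blokhuis' argument. If the distances in `S` are `a` and `b`, the quartics
`F_p(x) = (a² - ‖x - p‖²)(b² - ‖x - p‖²)`, `p ∈ S`, satisfy `F_p(q) = a²b² δ_pq` on `S`, and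
together with the `d + 1` affine functions `x_k`, `1` they are linearly independent: in a
vanishing combination `∑ c_p F_p + ⟪w, x⟫ + l`, the `r⁴` and `r³` coefficients along rays
`x = r y` force `∑ c_p = 0` and `∑ c_p p = 0`, and then evaluating at the points of `S` gives
`a²b² ∑ c_p² = 0`. All these functions lie in the span of `‖x‖⁴`, `‖x‖² x_k`, `x_i x_j`, `x_k`
and `1`, so `|S| + d + 1 ≤ 1 + d + (d+1 choose 2) + d + 1`, i.e. `|S| ≤ (d+2 choose 2)`.
-/

open scoped RealInnerProductSpace

lemma Set.exists_ne_subset_pair_of_ncard_le_two {α : Type*} [Nontrivial α] {s : Set α} {x : α}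
    (hs : s.Finite) (hx : x ∉ s) (h : s.ncard ≤ 2) : ∃ a b, a ≠ x ∧ b ≠ x ∧ s ⊆ {a, b} := by
  have hne {a : α} (ha : a ∈ s) : a ≠ x := fun hax => hx (hax ▸ ha)
  interval_cases hn : s.ncard
  · obtain ⟨y, hy⟩ := exists_ne x
    exact ⟨y, y, hy, hy, by simp [(Set.ncard_eq_zero hs).1 hn]⟩
  · obtain ⟨a, rfl⟩ := Set.ncard_eq_one.1 hn
    exact ⟨a, a, hne rfl, hne rfl, by simp⟩
  · obtain ⟨a, b, -, rfl⟩ := Set.ncard_eq_two.1 hn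
    exact ⟨a, b, hne (by simp), hne (by simp), subset_rfl⟩

lemma exists_forall_dist_eq_or_eq_of_ncard_le_two {X : Type*} [MetricSpace X] {S : Finset X}
    (h : {r : ℝ | ∃ p ∈ S, ∃ q ∈ S, p ≠ q ∧ dist p q = r}.ncard ≤ 2) :
    ∃ a b : ℝ, a ≠ 0 ∧ b ≠ 0 ∧ ∀ p ∈ S, ∀ q ∈ S, p ≠ q → dist p q = a ∨ dist p q = b := by
  -- `ncard` is `0` on infinite sets, so finiteness of the distance set has to be checked.
  have hfin : {r : ℝ | ∃ p ∈ S, ∃ q ∈ S, p ≠ q ∧ dist p q = r}.Finite := by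
    refine ((S ×ˢ S).finite_toSet.image fun pq => dist pq.1 pq.2).subset ?_
    rintro _ ⟨p, hp, q, hq, -, rfl⟩
    exact ⟨(p, q), by simp [hp, hq], rfl⟩
  have hzero : (0 : ℝ) ∉ {r : ℝ | ∃ p ∈ S, ∃ q ∈ S, p ≠ q ∧ dist p q = r} := by
    rintro ⟨p, -, q, -, hpq, hd⟩
    exact hpq (dist_eq_zero.1 hd)
  obtain ⟨a, b, ha, hb, hab⟩ := Set.exists_ne_subset_pair_of_ncard_le_two hfin hzero h
  exact ⟨a, b, ha, hb, fun p hp q hq hpq => hab ⟨p, hp, q, hq, hpq, rfl⟩⟩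

lemma quartic_coeffs_eq_zero {α β γ δ ε : ℝ}
    (h : ∀ r : ℝ, α * r ^ 4 + β * r ^ 3 + γ * r ^ 2 + δ * r + ε = 0) : α = 0 ∧ β = 0 := by
  have := h 0; have := h 1; have := h (-1); have := h 2; have := h (-2)
  norm_num at *
  constructor <;> linarith

section MetricSpace

variable {X : Type*} [PseudoMetricSpace X]

def distPoly (a b : ℝ) (p x : X) : ℝ := (a ^ 2 - dist x p ^ 2) * (b ^ 2 - dist x p ^ 2)

lemma distPoly_self (a b : ℝ) (p : X) : distPoly a b p p = a ^ 2 * b ^ 2 := by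
  simp [distPoly]

lemma distPoly_eq_zero {a b : ℝ} {p x : X} (h : dist x p = a ∨ dist x p = b) :
    distPoly a b p x = 0 := by
  rcases h with h | h <;> simp [distPoly, h]

end MetricSpace

section InnerProductSpace

variable {E : Type*} [NormedAddCommGroup E] [InnerProductSpace ℝ E]
variable {ι : Type*} [Fintype ι] {a b : ℝ} {P : ι → E} {c : ι → ℝ} {w : E} {l : ℝ}

/-- The `r⁴` and `r³` coefficients of `r ↦ ∑ cᵢ F_{Pᵢ}(r • y) + ⟪w, r • y⟫ + l`. -/
lemma top_coeffs_eq_zero (h : ∀ x, ∑ i, c i * distPoly a b (P i) x + ⟪w, x⟫ + l = 0) (y : E) :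
    (∑ i, c i) * ‖y‖ ^ 4 = 0 ∧ ‖y‖ ^ 2 * ⟪y, ∑ i, c i • P i⟫ = 0 := by
  -- Each coefficient is written as `c i * _` so that `← Finset.sum_mul` collects it below.
  have hray (r : ℝ) (i : ι) : c i * distPoly a b (P i) (r • y) =
      c i * ‖y‖ ^ 4 * r ^ 4 + c i * ⟪y, P i⟫ * (-4 * ‖y‖ ^ 2) * r ^ 3
      + c i * (4 * ⟪y, P i⟫ ^ 2 - ‖y‖ ^ 2 * (a ^ 2 + b ^ 2 - 2 * ‖P i‖ ^ 2)) * r ^ 2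
      + c i * (2 * ⟪y, P i⟫ * (a ^ 2 + b ^ 2 - 2 * ‖P i‖ ^ 2)) * r
      + c i * ((a ^ 2 - ‖P i‖ ^ 2) * (b ^ 2 - ‖P i‖ ^ 2)) := by
    rw [distPoly, dist_eq_norm, norm_sub_sq_real, real_inner_smul_left, norm_smul, mul_pow,
      Real.norm_eq_abs, sq_abs]
    ring
  obtain ⟨h4, h3⟩ := quartic_coeffs_eq_zero fun r => by
    have := h (r • y)
    simp only [hray, Finset.sum_add_distrib, ← Finset.sum_mul, real_inner_smul_right] at this
    -- merge `⟪w, y⟫ * r` and `l` into the linear and constant coefficients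
    rw [add_right_comm _ _ (r * _), add_assoc _ _ l, add_assoc _ (_ * r), mul_comm r, ← add_mul]
      at this
    exact this
  simp only [inner_sum, real_inner_smul_right]
  exact ⟨h4, by linear_combination -h3 / 4⟩

lemma sum_eq_zero_and_sum_smul_eq_zero [Nontrivial E]
    (h : ∀ x, ∑ i, c i * distPoly a b (P i) x + ⟪w, x⟫ + l = 0) :
    ∑ i, c i = 0 ∧ ∑ i, c i • P i = 0 := by
  obtain ⟨y, hy⟩ := exists_ne (0 : E)
  refine ⟨?_, ?_⟩
  · simpa [hy] using (top_coeffs_eq_zero h y).1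
  · simpa [real_inner_self_eq_norm_sq] using (top_coeffs_eq_zero h (∑ i, c i • P i)).2

theorem eq_zero_of_forall_sum_distPoly_add_inner_add_eq_zero [Nontrivial E] (ha : a ≠ 0)
    (hb : b ≠ 0) (hP : ∀ i j, i ≠ j → dist (P i) (P j) = a ∨ dist (P i) (P j) = b)
    (h : ∀ x, ∑ i, c i * distPoly a b (P i) x + ⟪w, x⟫ + l = 0) :
    c = 0 ∧ w = 0 ∧ l = 0 := by
  obtain ⟨hsum, hbary⟩ := sum_eq_zero_and_sum_smul_eq_zero h
  have heval (j : ι) : c j * (a ^ 2 * b ^ 2) + ⟪w, P j⟫ + l = 0 := by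
    rw [← h (P j), Fintype.sum_eq_single j fun i hij => by
      rw [distPoly_eq_zero (hP j i hij.symm), mul_zero], distPoly_self]
  have hsq : ∑ j, c j ^ 2 * (a ^ 2 * b ^ 2) = 0 := calc
    ∑ j, c j ^ 2 * (a ^ 2 * b ^ 2) = -⟪w, ∑ j, c j • P j⟫ - l * ∑ j, c j := by
      simp only [inner_sum, real_inner_smul_right, Finset.mul_sum, ← Finset.sum_neg_distrib,
        ← Finset.sum_sub_distrib]
      exact Finset.sum_congr rfl fun j _ => by linear_combination c j * heval j
    _ = 0 := by rw [hbary, hsum]; simp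
  have hc : c = 0 := by
    have hab : a ^ 2 * b ^ 2 ≠ 0 := by positivity
    simp only [← Finset.sum_mul, mul_eq_zero, hab, or_false] at hsq
    funext j
    simpa using (Finset.sum_eq_zero_iff_of_nonneg fun i _ => sq_nonneg (c i)).1 hsq j
      (Finset.mem_univ j)
  have hl : l = 0 := by simpa [hc] using h 0
  refine ⟨hc, ?_, hl⟩
  simpa [hc, hl] using h w

end InnerProductSpace

section EuclideanSpace

variable {d : ℕ}

def affineCoord : Option (Fin d) → EuclideanSpace ℝ (Fin d) → ℝ
  | none => fun _ => 1
  | some k => fun x => x k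

def quarticMonomial :
    Unit ⊕ Fin d ⊕ Sym2 (Fin d) ⊕ Option (Fin d) → EuclideanSpace ℝ (Fin d) → ℝ
  | .inl _ => fun x => ‖x‖ ^ 4
  | .inr (.inl k) => fun x => ‖x‖ ^ 2 * x k
  | .inr (.inr (.inl s)) =>
    Sym2.lift ⟨fun i j x => x i * x j, fun _ _ => funext fun _ => mul_comm _ _⟩ s
  | .inr (.inr (.inr k)) => affineCoord k

local notation "V" d => Submodule.span ℝ (Set.range (quarticMonomial (d := d)))

lemma affineCoord_mem_span (k : Option (Fin d)) : affineCoord k ∈ V d :=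
  Submodule.subset_span ⟨.inr (.inr (.inr k)), rfl⟩

lemma coord_mul_coord_mem_span (i j : Fin d) :
    (fun x : EuclideanSpace ℝ (Fin d) => x i * x j) ∈ V d :=
  Submodule.subset_span ⟨.inr (.inr (.inl s(i, j))), rfl⟩

lemma inner_mem_span (v : EuclideanSpace ℝ (Fin d)) : (fun x => ⟪v, x⟫) ∈ V d := by
  have : (fun x => ⟪v, x⟫) = ∑ k, v k • affineCoord (some k) := by
    ext x; simp [affineCoord, PiLp.inner_apply, mul_comm]
  rw [this]
  exact Submodule.sum_mem _ fun k _ => Submodule.smul_mem _ _ (affineCoord_mem_span _)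

lemma inner_mul_inner_mem_span (u v : EuclideanSpace ℝ (Fin d)) :
    (fun x => ⟪u, x⟫ * ⟪v, x⟫) ∈ V d := by
  have : (fun x => ⟪u, x⟫ * ⟪v, x⟫) =
      ∑ i, ∑ j, (u i * v j) • fun x : EuclideanSpace ℝ (Fin d) => x i * x j := by
    ext x
    simp only [PiLp.inner_apply, RCLike.inner_apply, conj_trivial, Finset.sum_mul_sum,
      Finset.sum_apply, Pi.smul_apply, smul_eq_mul]
    exact Finset.sum_congr rfl fun i _ => Finset.sum_congr rfl fun j _ => by ring
  rw [this]
  exact Submodule.sum_mem _ fun i _ => Submodule.sum_mem _ fun j _ =>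
    Submodule.smul_mem _ _ (coord_mul_coord_mem_span i j)

lemma norm_sq_mul_inner_mem_span (v : EuclideanSpace ℝ (Fin d)) :
    (fun x => ‖x‖ ^ 2 * ⟪v, x⟫) ∈ V d := by
  have : (fun x => ‖x‖ ^ 2 * ⟪v, x⟫) = ∑ k, v k • quarticMonomial (.inr (.inl k)) := by
    ext x
    simp only [quarticMonomial, PiLp.inner_apply, RCLike.inner_apply, conj_trivial,
      Finset.mul_sum, Finset.sum_apply, Pi.smul_apply, smul_eq_mul]
    exact Finset.sum_congr rfl fun i _ => by ring
  rw [this]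
  exact Submodule.sum_mem _ fun k _ => Submodule.smul_mem _ _ (Submodule.subset_span ⟨_, rfl⟩)

lemma norm_sq_mem_span : (fun x : EuclideanSpace ℝ (Fin d) => ‖x‖ ^ 2) ∈ V d := by
  have : (fun x : EuclideanSpace ℝ (Fin d) => ‖x‖ ^ 2) =
      ∑ k, fun x : EuclideanSpace ℝ (Fin d) => x k * x k := by
    ext x; rw [EuclideanSpace.norm_sq_eq]; simp [Real.norm_eq_abs, sq]
  rw [this]
  exact Submodule.sum_mem _ fun k _ => coord_mul_coord_mem_span k k

lemma distPoly_mem_span (a b : ℝ) (p : EuclideanSpace ℝ (Fin d)) : distPoly a b p ∈ V d := by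
  set u := a ^ 2 - ‖p‖ ^ 2
  set v := b ^ 2 - ‖p‖ ^ 2
  have : distPoly a b p = quarticMonomial (.inl ()) - (4 : ℝ) • (fun x => ‖x‖ ^ 2 * ⟪p, x⟫)
      + (4 : ℝ) • (fun x => ⟪p, x⟫ * ⟪p, x⟫) - (u + v) • (fun x => ‖x‖ ^ 2)
      + (2 * (u + v)) • (fun x => ⟪p, x⟫) + (u * v) • affineCoord none := by
    ext x
    simp only [distPoly, quarticMonomial, affineCoord, dist_eq_norm, norm_sub_sq_real,
      real_inner_comm x, Pi.add_apply, Pi.sub_apply, Pi.smul_apply, smul_eq_mul]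
    ring
  rw [this]
  refine Submodule.add_mem _ (Submodule.add_mem _ (Submodule.sub_mem _ (Submodule.add_mem _
    (Submodule.sub_mem _ (Submodule.subset_span ⟨_, rfl⟩) ?_) ?_) ?_) ?_) ?_ <;>
    refine Submodule.smul_mem _ _ ?_
  exacts [norm_sq_mul_inner_mem_span p, inner_mul_inner_mem_span p p, norm_sq_mem_span,
    inner_mem_span p, affineCoord_mem_span none]

theorem linearIndependent_distPoly_affineCoord [NeZero d] {ι : Type*} [Fintype ι] {a b : ℝ}
    (ha : a ≠ 0) (hb : b ≠ 0) {P : ι → EuclideanSpace ℝ (Fin d)}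
    (hP : ∀ i j, i ≠ j → dist (P i) (P j) = a ∨ dist (P i) (P j) = b) :
    LinearIndependent ℝ (Sum.elim (fun i => distPoly a b (P i)) affineCoord) := by
  rw [Fintype.linearIndependent_iff]
  intro g hg
  have h (x : EuclideanSpace ℝ (Fin d)) : ∑ i, g (.inl i) * distPoly a b (P i) x
      + ⟪WithLp.toLp 2 fun k => g (.inr (some k)), x⟫ + g (.inr none) = 0 := by
    have := congrFun hg x
    simp [Fintype.sum_sum_type, Fintype.sum_option, affineCoord, PiLp.inner_apply, mul_comm]
      at this ⊢
    linarith
  obtain ⟨hc, hw, hl⟩ := eq_zero_of_forall_sum_distPoly_add_inner_add_eq_zero ha hb hP h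
  rintro (i | _ | k)
  · exact congrFun hc i
  · exact hl
  · simpa using congrArg (· k) hw

theorem card_le_choose_two_of_forall_dist_eq_or_eq {S : Finset (EuclideanSpace ℝ (Fin d))}
    {a b : ℝ} (ha : a ≠ 0) (hb : b ≠ 0)
    (hS : ∀ p ∈ S, ∀ q ∈ S, p ≠ q → dist p q = a ∨ dist p q = b) :
    S.card ≤ (d + 2).choose 2 := by
  rcases Nat.eq_zero_or_pos d with rfl | hd
  · exact (Finset.card_le_one_of_subsingleton S).trans (by decide)
  have : NeZero d := ⟨hd.ne'⟩
  have hP (i j : S) (hij : i ≠ j) :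
      dist (i : EuclideanSpace ℝ (Fin d)) j = a ∨ dist (i : EuclideanSpace ℝ (Fin d)) j = b :=
    hS _ i.2 _ j.2 (Subtype.coe_ne_coe.2 hij)
  have hli := linearIndependent_distPoly_affineCoord ha hb hP
  have hspan : Submodule.span ℝ (Set.range (Sum.elim
      (fun i : S => distPoly a b (i : EuclideanSpace ℝ (Fin d))) affineCoord)) ≤ V d :=
    Submodule.span_le.2 <| Set.range_subset_iff.2 <| Sum.rec (fun _ => distPoly_mem_span a b _)
      affineCoord_mem_span
  have : FiniteDimensional ℝ (V d) := FiniteDimensional.span_of_finite ℝ (Set.finite_range _)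
  have hcard := (finrank_span_eq_card hli).symm.le.trans
    ((Submodule.finrank_mono hspan).trans (finrank_range_le_card _))
  simp only [Fintype.card_sum, Fintype.card_coe, Fintype.card_option, Fintype.card_fin,
    Fintype.card_unit, Sym2.card] at hcard
  have hpascal : (d + 2).choose 2 = (d + 1).choose 2 + (d + 1) := by
    simp [Nat.choose_succ_succ, add_comm]
  omega

end EuclideanSpace

theorem stmt1 {d : ℕ} (S : Finset (EuclideanSpace ℝ (Fin d)))
    (h : ({r : ℝ | ∃ p ∈ S, ∃ q ∈ S, p ≠ q ∧ dist p q = r}).ncard ≤ 2) :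
    S.card ≤ (d + 1) * (d + 2) / 2 := by
  obtain ⟨a, b, ha, hb, hS⟩ := exists_forall_dist_eq_or_eq_of_ncard_le_two h
  have := card_le_choose_two_of_forall_dist_eq_or_eq ha hb hS
  rwa [Nat.choose_two_right, mul_comm] at this
end
end

section
/- If G is a disjoint union of m cliques on n vertices, then for every b > 1 there is an embedding f of the vertex set of G into R^{n-1} such that dist(f(u), f(v)) = 1 when uv is an edge of G and dist(f(u), f(v)) = b when uv is a non-edge (u ≠ v). -/
open Polynomial Matrix

noncomputable section

/-!
Send vertex `v` to `a • e_v + c • e'_{P v}` in `ℝⁿ ⊕ ℝᵐ` with `2a² = 1` and `2c² = b² - 1`: two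
distinct vertices are at squared distance `1` if they lie in the same clique and `1 + (b² - 1)`
otherwise. These `n` points span an affine subspace of dimension at most `n - 1`, which embeds
isometrically in `ℝⁿ⁻¹`.
-/

theorem exists_linearIsometry_of_finrank_le {E F : Type*}
    [NormedAddCommGroup E] [InnerProductSpace ℝ E] [FiniteDimensional ℝ E]
    [NormedAddCommGroup F] [InnerProductSpace ℝ F] [FiniteDimensional ℝ F]
    (h : Module.finrank ℝ E ≤ Module.finrank ℝ F) : Nonempty (E →ₗᵢ[ℝ] F) :=
  let bE := stdOrthonormalBasis ℝ E
  let v := stdOrthonormalBasis ℝ F ∘ Fin.castLE h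
  ⟨(bE.toBasis.constr ℝ v).isometryOfOrthonormal (v := bE.toBasis)
    (by simp [bE.orthonormal]) <| by
    convert (stdOrthonormalBasis ℝ F).orthonormal.comp _ (Fin.castLE_injective h)
    ext1 i
    simp [bE, v]⟩

theorem exists_congruent_euclideanSpace_fin {ι E P : Type*} [Fintype ι]
    [NormedAddCommGroup E] [InnerProductSpace ℝ E] [MetricSpace P] [NormedAddTorsor E P]
    (p : ι → P) {k : ℕ} (hk : Fintype.card ι ≤ k + 1) :
    ∃ q : ι → EuclideanSpace ℝ (Fin k), Congruent q p := by
  cases isEmpty_or_nonempty ι with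
  | inl _ => exact ⟨isEmptyElim, isEmptyElim⟩
  | inr _ =>
    inhabit ι
    have hdim : Module.finrank ℝ (vectorSpan ℝ (Set.range p)) ≤
        Module.finrank ℝ (EuclideanSpace ℝ (Fin k)) := by
      have := finrank_vectorSpan_range_add_one_le ℝ p
      rw [finrank_euclideanSpace_fin]
      omega
    obtain ⟨L⟩ := exists_linearIsometry_of_finrank_le hdim
    refine ⟨fun i => L ⟨p i -ᵥ p default, vsub_mem_vectorSpan ℝ (Set.mem_range_self i)
      (Set.mem_range_self default)⟩, Congruent.of_dist_eq fun i j => ?_⟩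
    rw [L.dist_map, Subtype.dist_eq, dist_eq_norm, vsub_sub_vsub_cancel_right, dist_eq_norm_vsub]

theorem dist_single_single_sq_of_ne {ι : Type*} [Fintype ι] [DecidableEq ι] {i j : ι}
    (h : i ≠ j) (a : ℝ) :
    dist (EuclideanSpace.single i a) (EuclideanSpace.single j a) ^ 2 = 2 * a ^ 2 := by
  have horth : inner ℝ (EuclideanSpace.single i a) (EuclideanSpace.single j a) = 0 := by
    simp [EuclideanSpace.inner_single_left, h.symm]
  rw [dist_eq_norm, sq, norm_sub_sq_eq_norm_sq_add_norm_sq_real horth, PiLp.norm_single,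
    PiLp.norm_single, Real.norm_eq_abs, ← sq, sq_abs]
  ring

theorem stmt6 {n m : ℕ} (G : SimpleGraph (Fin n)) (P : Fin n → Fin m)
    (hP : ∀ u v, G.Adj u v ↔ u ≠ v ∧ P u = P v) :
    ∀ b : ℝ, 1 < b →
      ∃ f : Fin n → EuclideanSpace ℝ (Fin (n - 1)), IsRealization G b f := by
  intro b hb
  set a : ℝ := √(1 / 2)
  set c : ℝ := √((b ^ 2 - 1) / 2)
  have ha : 2 * a ^ 2 = 1 := by rw [Real.sq_sqrt (by norm_num)]; ring
  have hc : 2 * c ^ 2 = b ^ 2 - 1 := by rw [Real.sq_sqrt (by nlinarith)]; ring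
  let f₀ (v : Fin n) : WithLp 2 (EuclideanSpace ℝ (Fin n) × EuclideanSpace ℝ (Fin m)) :=
    WithLp.toLp 2 (EuclideanSpace.single v a, EuclideanSpace.single (P v) c)
  have hdist {u v : Fin n} (huv : u ≠ v) :
      dist (f₀ u) (f₀ v) = if P u = P v then 1 else b := by
    rw [WithLp.prod_dist_eq_of_L2]
    simp only [f₀, WithLp.toLp_fst, WithLp.toLp_snd, dist_single_single_sq_of_ne huv, ha]
    split_ifs with hPuv
    · simp [hPuv]
    · rw [dist_single_single_sq_of_ne hPuv, hc, add_sub_cancel, Real.sqrt_sq (by linarith)]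
  obtain ⟨f, hf⟩ := exists_congruent_euclideanSpace_fin f₀ (k := n - 1)
    (by rw [Fintype.card_fin]; omega)
  refine ⟨f, fun u v hadj => ?_, fun u v huv hnadj => ?_⟩
  · obtain ⟨huv, hPuv⟩ := (hP u v).1 hadj
    rw [hf.dist_eq, hdist huv, if_pos hPuv]
  · rw [hf.dist_eq, hdist huv, if_neg fun hPuv => hnadj ((hP u v).2 ⟨huv, hPuv⟩)]
end
end

section
/- Let G be a graph on n vertices that admits an embedding f into R^d as a two-distance set with distance 1 on edges and b > 1 on non-edges, and suppose θ(G) > d + 1. Then the image set S = f(V(G)) is a counterexample to Borsuk's conjecture in R^d: S cannot be partitioned into d + 1 subsets each of diameter strictly less than diam(S) = b. -/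
open Polynomial Matrix

noncomputable section

theorem stmt7 {n d : ℕ} (G : SimpleGraph (Fin n)) (b : ℝ) (hb : 1 < b)
    (f : Fin n → EuclideanSpace ℝ (Fin d)) (hf : IsRealization G b f)
    (hθ : d + 1 < cliqueCoverNumber G) :
    ¬ ∃ c : Fin (d + 1) → Set (EuclideanSpace ℝ (Fin d)),
      (∀ i, c i ⊆ Set.range f ∧ Metric.diam (c i) < b) ∧ Set.range f ⊆ ⋃ i, c i := by
  rintro ⟨c, hc, hcov⟩
  have key : cliqueCoverNumber G ≤ d + 1 := by
    apply Nat.sInf_le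
    refine ⟨fun i => f ⁻¹' (c i), fun i u hu v hv huv => ?_, ?_⟩
    · by_contra hadj
      have hd : dist (f u) (f v) = b := hf.2 u v huv hadj
      have hbd : Bornology.IsBounded (c i) :=
        ((Set.finite_range f).isBounded).subset (hc i).1
      have := Metric.dist_le_diam_of_mem hbd hu hv
      linarith [(hc i).2]
    · ext v
      simp only [Set.mem_iUnion, Set.mem_univ, iff_true, Set.mem_preimage]
      have : f v ∈ ⋃ i, c i := hcov ⟨v, rfl⟩
      simpa using this
  omega
end
end

section
/- Every finite simple graph G on n vertices can be embedded in R^{n−1} as a two-distance set: there exist b > 1 and an injective map f: V(G) → R^{n−1} with dist(f(u),f(v)) = 1 for edges uv and dist(f(u),f(v)) = b for non-edges uv (u ≠ v). -/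
open Polynomial Matrix

noncomputable section

/-!
Vectors whose Gram matrix is `M = ((1 + δ)/2) I + (δ/2) A_G` have squared distance
`M_ii + M_jj - 2 M_ij`, which is `1` on edges and `1 + δ` on non-edges. Since
`|xᵀ A_G x| ≤ n ‖x‖²`, the matrix `M` is positive semidefinite once `δ n ≤ 1`, so such vectors
exist in `ℝⁿ`. Finally, any `n` points span an affine subspace of dimension at most `n - 1`, which
embeds isometrically into `ℝⁿ⁻¹`.
-/

open Module Finset

open scoped MatrixOrder ComplexOrder in
theorem Matrix.PosSemidef.exists_gram_eq {𝕜 ι : Type*} [RCLike 𝕜] [Fintype ι]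
    {M : Matrix ι ι 𝕜} (hM : M.PosSemidef) :
    ∃ v : ι → EuclideanSpace 𝕜 ι, gram 𝕜 v = M := by
  classical
  obtain ⟨B, rfl⟩ := CStarAlgebra.nonneg_iff_eq_star_mul_self.mp hM.nonneg
  refine ⟨fun i => WithLp.toLp 2 fun k => B k i, ?_⟩
  ext i j
  simp [gram_apply, PiLp.inner_apply, mul_apply, mul_comm]

theorem dist_sq_eq_gram {ι E : Type*} [NormedAddCommGroup E] [InnerProductSpace ℝ E]
    (v : ι → E) (i j : ι) :
    dist (v i) (v j) ^ 2 = gram ℝ v i i + gram ℝ v j j - 2 * gram ℝ v i j := by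
  rw [dist_eq_norm, norm_sub_sq_real]
  simp only [gram_apply, real_inner_self_eq_norm_sq]
  ring

theorem Matrix.abs_dotProduct_mulVec_le {ι : Type*} [Fintype ι] {A : Matrix ι ι ℝ}
    (hA : ∀ i j, |A i j| ≤ 1) (x : ι → ℝ) :
    |x ⬝ᵥ A *ᵥ x| ≤ Fintype.card ι * (x ⬝ᵥ x) := by
  have expand : x ⬝ᵥ A *ᵥ x = ∑ i, ∑ j, x i * A i j * x j := by
    simp [dotProduct, mulVec, mul_sum, mul_assoc]
  calc |x ⬝ᵥ A *ᵥ x| ≤ ∑ i, ∑ j, |x i * A i j * x j| := by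
        rw [expand]
        exact (abs_sum_le_sum_abs _ _).trans (sum_le_sum fun i _ => abs_sum_le_sum_abs _ _)
    _ ≤ ∑ i, ∑ j, |x i| * |x j| := by
        gcongr with i _ j _
        rw [abs_mul, abs_mul]
        exact mul_le_mul_of_nonneg_right (mul_le_of_le_one_right (abs_nonneg _) (hA i j))
          (abs_nonneg _)
    _ = (∑ i, |x i|) ^ 2 := by rw [sq, sum_mul_sum]
    _ ≤ Fintype.card ι * ∑ i, |x i| ^ 2 := sq_sum_le_card_mul_sum_sq ..
    _ = Fintype.card ι * (x ⬝ᵥ x) := by simp [dotProduct, sq]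

theorem exists_linearIsometry_euclideanSpace_of_finrank_le {𝕜 E : Type*} [RCLike 𝕜]
    [NormedAddCommGroup E] [InnerProductSpace 𝕜 E] [FiniteDimensional 𝕜 E] {m : ℕ}
    (h : finrank 𝕜 E ≤ m) : Nonempty (E →ₗᵢ[𝕜] EuclideanSpace 𝕜 (Fin m)) := by
  let b := stdOrthonormalBasis 𝕜 E
  let e : Fin (finrank 𝕜 E) → EuclideanSpace 𝕜 (Fin m) :=
    fun i => EuclideanSpace.single (Fin.castLE h i) 1
  have he : Orthonormal 𝕜 e :=
    EuclideanSpace.orthonormal_single.comp _ (Fin.castLE_injective h)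
  have hb : Orthonormal 𝕜 b.toBasis := by rw [b.coe_toBasis]; exact b.orthonormal
  refine ⟨(b.toBasis.constr 𝕜 e).isometryOfOrthonormal hb ?_⟩
  convert he
  ext1 i
  simp

theorem exists_euclideanSpace_fin_pred_isometric {V P : Type*} [NormedAddCommGroup V]
    [InnerProductSpace ℝ V] [MetricSpace P] [NormedAddTorsor V P] {n : ℕ} (p : Fin n → P) :
    ∃ q : Fin n → EuclideanSpace ℝ (Fin (n - 1)), ∀ i j, dist (q i) (q j) = dist (p i) (p j) := by
  rcases n with _ | m
  · exact ⟨finZeroElim, finZeroElim⟩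
  obtain ⟨L⟩ := exists_linearIsometry_euclideanSpace_of_finrank_le
    (finrank_vectorSpan_range_le ℝ p (Fintype.card_fin (m + 1)))
  refine ⟨fun i => L ⟨p i -ᵥ p 0, vsub_mem_vectorSpan ℝ (Set.mem_range_self i)
    (Set.mem_range_self 0)⟩, fun i j => ?_⟩
  rw [dist_eq_norm, ← map_sub, L.norm_map]
  change ‖(p i -ᵥ p 0) - (p j -ᵥ p 0)‖ = _
  rw [vsub_sub_vsub_cancel_right, dist_eq_norm_vsub V]

namespace SimpleGraph

variable {V : Type*} [DecidableEq V] (G : SimpleGraph V) [DecidableRel G.Adj]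

def twoDistanceGram (δ : ℝ) : Matrix V V ℝ :=
  ((1 + δ) / 2) • (1 : Matrix V V ℝ) + (δ / 2) • G.adjMatrix ℝ

theorem twoDistanceGram_apply (δ : ℝ) (i j : V) :
    G.twoDistanceGram δ i j = if i = j then (1 + δ) / 2 else if G.Adj i j then δ / 2 else 0 := by
  rcases eq_or_ne i j with rfl | hne
  · simp [twoDistanceGram]
  · by_cases hij : G.Adj i j <;> simp [twoDistanceGram, one_apply, hne, hij]

theorem posSemidef_twoDistanceGram [Fintype V] {δ : ℝ} (hδ : 0 ≤ δ)
    (hδn : δ * Fintype.card V ≤ 1) : (G.twoDistanceGram δ).PosSemidef := by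
  refine .of_dotProduct_mulVec_nonneg ?_ fun x => ?_
  · exact (isHermitian_one.smul (IsSelfAdjoint.all _)).add
      ((G.isHermitian_adjMatrix ℝ).smul (IsSelfAdjoint.all _))
  have hA := abs_le.mp (abs_dotProduct_mulVec_le (A := G.adjMatrix ℝ)
    (fun i j => by by_cases h : G.Adj i j <;> simp [h]) x)
  have hx : 0 ≤ x ⬝ᵥ x := dotProduct_self_star_nonneg x
  simp only [star_trivial, twoDistanceGram, add_mulVec, smul_mulVec, one_mulVec, dotProduct_add,
    dotProduct_smul, smul_eq_mul]
  nlinarith [mul_nonneg hδ (by linarith [hA.1] :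
    0 ≤ x ⬝ᵥ G.adjMatrix ℝ *ᵥ x + Fintype.card V * (x ⬝ᵥ x))]

end SimpleGraph

theorem exists_two_distance_embedding {V : Type*} [Fintype V] [DecidableEq V]
    (G : SimpleGraph V) [DecidableRel G.Adj] {δ : ℝ} (hδ : 0 ≤ δ)
    (hδn : δ * Fintype.card V ≤ 1) :
    ∃ v : V → EuclideanSpace ℝ V, (∀ i j, G.Adj i j → dist (v i) (v j) = 1) ∧
      ∀ i j, i ≠ j → ¬ G.Adj i j → dist (v i) (v j) = √(1 + δ) := by
  obtain ⟨v, hv⟩ := (G.posSemidef_twoDistanceGram hδ hδn).exists_gram_eq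
  have hsq : ∀ i j, i ≠ j → dist (v i) (v j) ^ 2 = if G.Adj i j then 1 else 1 + δ := by
    intro i j hne
    rw [dist_sq_eq_gram, hv]
    simp only [G.twoDistanceGram_apply, if_neg hne]
    split_ifs <;> ring
  refine ⟨v, fun i j h => ?_, fun i j hne h => ?_⟩
  · rw [← Real.sqrt_sq dist_nonneg, hsq i j (G.ne_of_adj h), if_pos h, Real.sqrt_one]
  · rw [← Real.sqrt_sq dist_nonneg, hsq i j hne, if_neg h]

theorem IsRealization.injective {n d : ℕ} {G : SimpleGraph (Fin n)} {b : ℝ}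
    {f : Fin n → EuclideanSpace ℝ (Fin d)} (hf : IsRealization G b f) (hb : b ≠ 0) :
    Function.Injective f := by
  intro i j hij
  by_contra hne
  have hdist : dist (f i) (f j) = 0 := dist_eq_zero.mpr hij
  by_cases hadj : G.Adj i j
  · exact one_ne_zero ((hf.1 i j hadj).symm.trans hdist)
  · exact hb ((hf.2 i j hne hadj).symm.trans hdist)

theorem stmt17 {n : ℕ} (G : SimpleGraph (Fin n)) :
    ∃ b : ℝ, 1 < b ∧ ∃ f : Fin n → EuclideanSpace ℝ (Fin (n - 1)),
      Function.Injective f ∧ IsRealization G b f := by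
  classical
  set δ : ℝ := 1 / (n + 1)
  have hδ : 0 < δ := by positivity
  have hδn : δ * Fintype.card (Fin n) ≤ 1 := by
    rw [Fintype.card_fin, one_div_mul_eq_div, div_le_one (by positivity)]
    linarith
  obtain ⟨v, hadj, hnonadj⟩ := exists_two_distance_embedding G hδ.le hδn
  obtain ⟨f, hf⟩ := exists_euclideanSpace_fin_pred_isometric v
  have hreal : IsRealization G √(1 + δ) f :=
    ⟨fun i j h => (hf i j).trans (hadj i j h), fun i j hne h => (hf i j).trans (hnonadj i j hne h)⟩
  have hb : 1 < √(1 + δ) := by rw [Real.lt_sqrt zero_le_one]; linarith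
  exact ⟨_, hb, f, hreal.injective (by positivity), hreal⟩
end
end
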